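/- arXiv:2203.14294 — 2 statements merged into one kernel-verified Lean document; each statement's English description precedes it below -/
import Mathlib

section
/- Suppose that in addition lim_{t→∞} (1/t)∫_0^t P(q1(u) ≤ c1) du = 0. Then λ1 ≥ μ1 + μ_{1|2}(1 − ρ2). Equivalently (contrapositive), if λ1 < μ1 + μ_{1|2}(1 − ρ2), then limsup_{t→∞} (1/t)∫_0^t P(q1(u) ≤ c1) du > 0. (This is the sample-path core of the sufficiency part of Theorem 3.1 on stability of the 2-station cascade system, as isolated in Section 6 of the paper.) -/
/-!
Let `F t` be the time in `[0, t]` during which station 1 holds at most `c1` customers. By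
Fubini, `E[F t] / t → 0`, so `F t / t → 0` in `L¹`, and hence almost surely along a
sequence `t_k → ∞`. On such a path station 1 is busy except during time `F`, and a switched
customer is in service whenever station 2 is empty except during time `F`; as `N1` and
`N_{1|2}` are nondecreasing, flow balance gives
`N1 (t - F) + N_{1|2} (I2 t - F) ≤ q1 0 + A1 t`.
Dividing by `t_k` and letting `k → ∞` yields `μ1 + μ_{1|2} (1 - ρ2) ≤ λ1`.
-/

open MeasureTheory Filter Set Topology

noncomputable def occupationTime (p : ℝ → Prop) [DecidablePred p] (t : ℝ) : ℝ :=
  ∫ u in (0:ℝ)..t, if p u then (1:ℝ) else 0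

section Deterministic

variable {p q r : ℝ → Prop} [DecidablePred p] [DecidablePred q] [DecidablePred r] {t : ℝ}

lemma occupationTime_eq_measureReal (hp : MeasurableSet {u | p u}) (ht : 0 ≤ t) :
    occupationTime p t = volume.real ({u | p u} ∩ Ioc 0 t) := by
  rw [occupationTime, intervalIntegral.integral_of_le ht, ← measureReal_restrict_apply hp,
    ← integral_indicator_one hp]
  congr with u
  simp [indicator_apply]

lemma occupationTime_nonneg (ht : 0 ≤ t) : 0 ≤ occupationTime p t :=
  intervalIntegral.integral_nonneg ht fun u _ => by split_ifs <;> norm_num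

lemma occupationTime_le (hp : MeasurableSet {u | p u}) (ht : 0 ≤ t) :
    occupationTime p t ≤ t := by
  rw [occupationTime_eq_measureReal hp ht]
  calc volume.real ({u | p u} ∩ Ioc 0 t) ≤ volume.real (Ioc 0 t) :=
        measureReal_mono inter_subset_right measure_Ioc_lt_top.ne
    _ = t := by simp [ht]

lemma occupationTime_sub_le (hp : MeasurableSet {u | p u}) (hq : MeasurableSet {u | q u})
    (hr : MeasurableSet {u | r u}) (ht : 0 ≤ t) (hpqr : ∀ u, p u → q u ∨ r u) :
    occupationTime p t - occupationTime r t ≤ occupationTime q t := by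
  simp only [occupationTime_eq_measureReal, hp, hq, hr, ht, sub_le_iff_le_add]
  calc volume.real ({u | p u} ∩ Ioc 0 t)
      ≤ volume.real ({u | q u} ∩ Ioc 0 t ∪ {u | r u} ∩ Ioc 0 t) :=
        measureReal_mono (fun u ⟨hu, hut⟩ => (hpqr u hu).imp (⟨·, hut⟩) (⟨·, hut⟩))
          ((measure_mono (union_subset inter_subset_right inter_subset_right)).trans_lt
            measure_Ioc_lt_top).ne
    _ ≤ _ := measureReal_union_le _ _

end Deterministic

section Probabilistic

variable {Ω : Type*} [MeasurableSpace Ω] {P : Measure Ω} {p : ℝ → Ω → Prop}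
  [∀ u ω, Decidable (p u ω)]

lemma measurable_occupationTime (hp : MeasurableSet {x : ℝ × Ω | p x.1 x.2}) (t : ℝ) :
    Measurable fun ω => occupationTime (fun u => p u ω) t := by
  have hf : StronglyMeasurable fun x : Ω × ℝ => if p x.2 x.1 then (1:ℝ) else 0 :=
    (Measurable.ite (measurable_swap hp) measurable_const measurable_const).stronglyMeasurable
  simp_rw [occupationTime, intervalIntegral.intervalIntegral_eq_integral_uIoc]
  exact ((hf.integral_prod_right' (ν := volume.restrict (uIoc 0 t))).measurable.const_smul
    (if (0:ℝ) ≤ t then (1:ℝ) else -1))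

lemma integral_occupationTime [IsFiniteMeasure P]
    (hp : MeasurableSet {x : ℝ × Ω | p x.1 x.2}) (t : ℝ) :
    ∫ ω, occupationTime (fun u => p u ω) t ∂P = ∫ u in (0:ℝ)..t, P.real {ω | p u ω} := by
  have hint : Integrable (Function.uncurry fun u ω => if p u ω then (1:ℝ) else 0)
      ((volume.restrict (uIoc 0 t)).prod P) := by
    have : IsFiniteMeasure (volume.restrict (uIoc (0:ℝ) t)) :=
      isFiniteMeasure_restrict.2 measure_Ioc_lt_top.ne
    refine (integrable_const (1:ℝ)).mono'
      (Measurable.ite hp measurable_const measurable_const).aestronglyMeasurable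
      (Eventually.of_forall fun x => ?_)
    simp only [Function.uncurry]; split_ifs <;> simp
  simp_rw [occupationTime]
  rw [← intervalIntegral_integral_swap hint]
  congr with u
  have hpu : MeasurableSet {ω | p u ω} := measurable_prodMk_left hp
  rw [← integral_indicator_one hpu]
  congr with ω
  simp [indicator_apply]

lemma exists_seq_tendsto_ae_zero_of_integral_tendsto_zero {α : Type*} [MeasurableSpace α]
    {μ : Measure α} {X : ℕ → α → ℝ} (hX : ∀ n, Integrable (X n) μ) (hX0 : ∀ n, 0 ≤ᵐ[μ] X n)
    (h : Tendsto (fun n => ∫ a, X n a ∂μ) atTop (𝓝 0)) :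
    ∃ ns : ℕ → ℕ, StrictMono ns ∧ ∀ᵐ a ∂μ, Tendsto (fun k => X (ns k) a) atTop (𝓝 0) := by
  have hL1 : Tendsto (fun n => eLpNorm (X n - 0) 1 μ) atTop (𝓝 0) := by
    have : ∀ n, eLpNorm (X n - 0) 1 μ = ENNReal.ofReal (∫ a, X n a ∂μ) := fun n => by
      rw [sub_zero, eLpNorm_one_eq_lintegral_enorm,
        ofReal_integral_eq_lintegral_ofReal (hX n) (hX0 n)]
      exact lintegral_congr_ae ((hX0 n).mono fun a ha => Real.enorm_eq_ofReal ha)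
    simp_rw [this]
    simpa using ENNReal.tendsto_ofReal h
  exact (tendstoInMeasure_of_tendsto_eLpNorm one_ne_zero (fun n => (hX n).aestronglyMeasurable)
    aestronglyMeasurable_const hL1).exists_seq_tendsto_ae

lemma exists_seq_occupationTime_div_tendsto_zero [IsFiniteMeasure P]
    (hp : MeasurableSet {x : ℝ × Ω | p x.1 x.2})
    (h : Tendsto (fun t : ℝ => (1 / t) * ∫ u in (0:ℝ)..t, P.real {ω | p u ω}) atTop (𝓝 0)) :
    ∃ ns : ℕ → ℕ, StrictMono ns ∧
      ∀ᵐ ω ∂P, Tendsto (fun k => occupationTime (fun u => p u ω) (ns k) / ns k) atTop (𝓝 0) := by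
  have hnonneg (n : ℕ) (ω : Ω) : 0 ≤ occupationTime (fun u => p u ω) n / n :=
    div_nonneg (occupationTime_nonneg n.cast_nonneg) n.cast_nonneg
  refine exists_seq_tendsto_ae_zero_of_integral_tendsto_zero (fun n => ?_)
    (fun n => Eventually.of_forall (hnonneg n)) ?_
  · refine (integrable_const (1:ℝ)).mono'
      ((measurable_occupationTime hp n).div_const _).aestronglyMeasurable
      (Eventually.of_forall fun ω => ?_)
    rw [Real.norm_of_nonneg (hnonneg n ω)]
    exact div_le_one_of_le₀ (occupationTime_le (measurable_prodMk_right hp) n.cast_nonneg)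
      n.cast_nonneg
  · refine (h.comp tendsto_natCast_atTop_atTop).congr fun n => ?_
    rw [Function.comp_apply, integral_div, integral_occupationTime hp, one_div_mul_eq_div]

end Probabilistic

lemma tendsto_comp_div_of_tendsto_div {ι : Type*} {l : Filter ι} {g : ℝ → ℝ} {x t : ι → ℝ}
    {μ c : ℝ} (hg : Tendsto (fun s => g s / s) atTop (𝓝 μ)) (ht : Tendsto t l atTop)
    (hx : Tendsto (fun i => x i / t i) l (𝓝 c)) (hc : 0 < c) :
    Tendsto (fun i => g (x i) / t i) l (𝓝 (μ * c)) := by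
  have hx_top : Tendsto x l atTop := by
    refine (hx.pos_mul_atTop hc ht).congr' ?_
    filter_upwards [ht.eventually_gt_atTop 0] with i hi
    exact div_mul_cancel₀ _ hi.ne'
  refine ((hg.comp hx_top).mul hx).congr' ?_
  filter_upwards [hx_top.eventually_gt_atTop 0] with i hi
  exact div_mul_div_cancel₀ hi.ne'

lemma service_le_arrivals {q1 q2 A1 D1 A12 D12 N1 N12 : ℝ → ℕ} {c1 : ℕ} {t : ℝ}
    (hc1 : 1 ≤ c1) (hq1 : Measurable q1) (hq2 : Measurable q2)
    (hN1 : MonotoneOn N1 (Ici 0)) (hN12 : MonotoneOn N12 (Ici 0)) (ht : 0 ≤ t)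
    (hflow : (q1 t : ℝ) = q1 0 + A1 t - D1 t - A12 t) (hDA : D12 t ≤ A12 t)
    (hD1 : D1 t = N1 (occupationTime (fun u => 1 ≤ q1 u) t))
    (hD12 : N12 (occupationTime (fun u => c1 < q1 u ∧ q2 u = 0) t) ≤ D12 t)
    (hI2 : occupationTime (fun u => q1 u ≤ c1) t ≤ occupationTime (fun u => q2 u = 0) t) :
    (N1 (t - occupationTime (fun u => q1 u ≤ c1) t) : ℝ) +
      N12 (occupationTime (fun u => q2 u = 0) t - occupationTime (fun u => q1 u ≤ c1) t)
      ≤ q1 0 + A1 t := by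
  have hmeas (s : Set (ℕ × ℕ)) : MeasurableSet {u | (q1 u, q2 u) ∈ s} :=
    (hq1.prodMk hq2) (.of_discrete)
  set F := occupationTime (fun u => q1 u ≤ c1) t
  set I2 := occupationTime (fun u => q2 u = 0) t
  have hbusy : t - F ≤ occupationTime (fun u => 1 ≤ q1 u) t := by
    have h := occupationTime_sub_le (p := fun _ => True) .univ (hmeas {x | 1 ≤ x.1})
      (hmeas {x | x.1 ≤ c1}) ht (fun u _ => show 1 ≤ q1 u ∨ q1 u ≤ c1 by omega)
    rwa [show occupationTime (fun _ => True) t = t by simp [occupationTime]] at h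
  have hswitched : I2 - F ≤ occupationTime (fun u => c1 < q1 u ∧ q2 u = 0) t :=
    occupationTime_sub_le (hmeas {x | x.2 = 0}) (hmeas {x | c1 < x.1 ∧ x.2 = 0})
      (hmeas {x | x.1 ≤ c1}) ht (fun u _ => by omega)
  have h1 : (N1 (t - F) : ℝ) ≤ D1 t := by
    exact_mod_cast hD1 ▸ hN1 (sub_nonneg.2 (occupationTime_le (hmeas {x | x.1 ≤ c1}) ht))
      (occupationTime_nonneg ht) hbusy
  have h12 : (N12 (I2 - F) : ℝ) ≤ A12 t := by
    exact_mod_cast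
      ((hN12 (sub_nonneg.2 hI2) (occupationTime_nonneg ht) hswitched).trans hD12).trans hDA
  have hq : (0 : ℝ) ≤ q1 t := Nat.cast_nonneg _
  linarith

theorem cascade_two_station_core_general
    {Ω : Type*} [MeasurableSpace Ω] (P : Measure Ω) [IsProbabilityMeasure P]
    (lam1 mu1 mu12 ρ2 : ℝ) (c1 : ℕ)
    (hρ2_lt : ρ2 < 1) (hc1 : 1 ≤ c1)
    (q1 q2 : ℝ → Ω → ℕ)
    (hq1meas : Measurable (Function.uncurry q1))
    (hq2meas : Measurable (Function.uncurry q2))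
    (A1 D1 A12 D12 N1 N12 : ℝ → Ω → ℕ)
    (hN1mono : ∀ ω, MonotoneOn (fun t => N1 t ω) (Ici 0))
    (hN12mono : ∀ ω, MonotoneOn (fun t => N12 t ω) (Ici 0))
    -- pathwise flow balance: q1(t) = q1(0) + A1(t) − D1(t) − A_{1|2}(t)
    (hflow : ∀ t ≥ (0:ℝ), ∀ ω,
      (q1 t ω : ℝ) = (q1 0 ω : ℝ) + A1 t ω - D1 t ω - A12 t ω)
    -- at most one switched customer in station 2: D_{1|2}(t) ≤ A_{1|2}(t) ≤ D_{1|2}(t) + 1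
    (hAD : ∀ t ≥ (0:ℝ), ∀ ω, D12 t ω ≤ A12 t ω ∧ A12 t ω ≤ D12 t ω + 1)
    -- departures of class-1 customers: D1(t) = N1(B1(t))
    (hD1 : ∀ t ≥ (0:ℝ), ∀ ω,
      D1 t ω = N1 (∫ u in (0:ℝ)..t, if 1 ≤ q1 u ω then (1:ℝ) else 0) ω)
    -- sandwich for switched departures: N_{1|2}(J_{1|2}(t)) ≤ D_{1|2}(t) ≤ N_{1|2}(I2(t))
    (hD12 : ∀ t ≥ (0:ℝ), ∀ ω,
      N12 (∫ u in (0:ℝ)..t, if c1 < q1 u ω ∧ q2 u ω = 0 then (1:ℝ) else 0) ω ≤ D12 t ω ∧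
      D12 t ω ≤ N12 (∫ u in (0:ℝ)..t, if q2 u ω = 0 then (1:ℝ) else 0) ω)
    -- almost sure rate limits
    (hA1lim : ∀ᵐ ω ∂P, Tendsto (fun t : ℝ => (A1 t ω : ℝ) / t) atTop (nhds lam1))
    (hN1lim : ∀ᵐ ω ∂P, Tendsto (fun t : ℝ => (N1 t ω : ℝ) / t) atTop (nhds mu1))
    (hN12lim : ∀ᵐ ω ∂P, Tendsto (fun t : ℝ => (N12 t ω : ℝ) / t) atTop (nhds mu12))
    (hI2lim : ∀ᵐ ω ∂P,
      Tendsto (fun t : ℝ => (∫ u in (0:ℝ)..t, if q2 u ω = 0 then (1:ℝ) else 0) / t)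
        atTop (nhds (1 - ρ2)))
    -- the additional hypothesis: the time-averaged probability that station 1 holds at most
    -- c1 customers vanishes
    (hq1prob : Tendsto
      (fun t : ℝ => (1 / t) * ∫ u in (0:ℝ)..t, (P {ω | q1 u ω ≤ c1}).toReal)
      atTop (nhds 0)) :
    mu1 + mu12 * (1 - ρ2) ≤ lam1 := by
  obtain ⟨ns, hns, hFlim⟩ := exists_seq_occupationTime_div_tendsto_zero
    (p := fun u ω => q1 u ω ≤ c1) (hq1meas (measurableSet_Iic (a := c1))) hq1prob
  obtain ⟨ω, ⟨⟨⟨hA1ω, hN1ω⟩, hN12ω⟩, hI2ω⟩, hFω⟩ :=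
    ((((hA1lim.and hN1lim).and hN12lim).and hI2lim).and hFlim).exists
  set t : ℕ → ℝ := fun k => ns k
  set F : ℕ → ℝ := fun k => occupationTime (fun u => q1 u ω ≤ c1) (t k)
  set I2 : ℕ → ℝ := fun k => occupationTime (fun u => q2 u ω = 0) (t k)
  have ht : Tendsto t atTop atTop := tendsto_natCast_atTop_atTop.comp hns.tendsto_atTop
  have hbusy : Tendsto (fun k => (t k - F k) / t k) atTop (𝓝 1) := by
    have h := (tendsto_const_nhds (x := (1:ℝ))).sub hFω
    rw [sub_zero] at h
    refine h.congr' ?_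
    filter_upwards [ht.eventually_gt_atTop 0] with k hk
    rw [sub_div, div_self hk.ne']
  have hswitched : Tendsto (fun k => (I2 k - F k) / t k) atTop (𝓝 (1 - ρ2)) := by
    have h := (hI2ω.comp ht).sub hFω
    rw [sub_zero] at h
    exact h.congr fun k => (sub_div _ _ _).symm
  have hlim : Tendsto (fun k => ((N1 (t k - F k) ω : ℝ) + N12 (I2 k - F k) ω - q1 0 ω) / t k)
      atTop (𝓝 (mu1 + mu12 * (1 - ρ2))) := by
    simp_rw [sub_div, add_div]
    simpa using ((tendsto_comp_div_of_tendsto_div hN1ω ht hbusy one_pos).add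
      (tendsto_comp_div_of_tendsto_div hN12ω ht hswitched (sub_pos.2 hρ2_lt))).sub
      (tendsto_const_nhds.div_atTop ht)
  refine le_of_tendsto_of_tendsto hlim (hA1ω.comp ht) ?_
  filter_upwards [ht.eventually_gt_atTop 0,
    hswitched.eventually (eventually_gt_nhds (sub_pos.2 hρ2_lt))] with k htk hIk
  have hIF : F k ≤ I2 k := (sub_pos.1 ((div_pos_iff_of_pos_right htk).1 hIk)).le
  refine div_le_div_of_nonneg_right ?_ htk.le
  linarith [service_le_arrivals (A1 := (A1 · ω)) (D1 := (D1 · ω)) (A12 := (A12 · ω))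
    (D12 := (D12 · ω)) hc1 hq1meas.of_uncurry_right hq2meas.of_uncurry_right (hN1mono ω)
    (hN12mono ω) htk.le (hflow _ htk.le ω) (hAD _ htk.le ω).1 (hD1 _ htk.le ω)
    (hD12 _ htk.le ω).1 hIF]

/-- the sample-path core of the sufficiency part of Theorem 3.1, as
isolated in Section 6 of the paper.  Fix `λ1, μ1, μ_{1|2} > 0`, `0 ≤ ρ2 < 1` and an
integer threshold `c1 ≥ 1`.  Queue lengths `q1, q2` are jointly measurable; the arrival
and departure counting processes `A1, D1, A_{1|2}, D_{1|2}` are nondecreasing in `t` with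
value `0` at `t = 0`, and `N1, N_{1|2}` are nondecreasing potential-service counting
processes.  With the occupation integrals `B1 t = ∫_0^t 1(q1 u ≥ 1) du`,
`I2 t = ∫_0^t 1(q2 u = 0) du` and `J_{1|2} t = ∫_0^t 1(q1 u > c1 ∧ q2 u = 0) du`, assume
the pathwise relations `q1 t = q1 0 + A1 t − D1 t − A_{1|2} t`,
`D_{1|2} t ≤ A_{1|2} t ≤ D_{1|2} t + 1`, `D1 t = N1 (B1 t)` and
`N_{1|2} (J_{1|2} t) ≤ D_{1|2} t ≤ N_{1|2} (I2 t)` for all `t ≥ 0` and every `ω`; assume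
the almost sure limits `A1 t / t → λ1`, `N1 t / t → μ1`, `N_{1|2} t / t → μ_{1|2}` and
`I2 t / t → 1 − ρ2` as `t → ∞`.  If moreover
`(1/t) ∫_0^t P(q1 u ≤ c1) du → 0`, then `λ1 ≥ μ1 + μ_{1|2} (1 − ρ2)`. -/
theorem cascade_two_station_core
    {Ω : Type*} [MeasurableSpace Ω] (P : Measure Ω) [IsProbabilityMeasure P]
    (lam1 mu1 mu12 ρ2 : ℝ) (c1 : ℕ)
    (hlam1 : 0 < lam1) (hmu1 : 0 < mu1) (hmu12 : 0 < mu12)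
    (hρ2_nonneg : 0 ≤ ρ2) (hρ2_lt : ρ2 < 1) (hc1 : 1 ≤ c1)
    (q1 q2 : ℝ → Ω → ℕ)
    (hq1meas : Measurable (Function.uncurry q1))
    (hq2meas : Measurable (Function.uncurry q2))
    (A1 D1 A12 D12 N1 N12 : ℝ → Ω → ℕ)
    (hA1mono : ∀ ω, MonotoneOn (fun t => A1 t ω) (Ici 0))
    (hD1mono : ∀ ω, MonotoneOn (fun t => D1 t ω) (Ici 0))
    (hA12mono : ∀ ω, MonotoneOn (fun t => A12 t ω) (Ici 0))
    (hD12mono : ∀ ω, MonotoneOn (fun t => D12 t ω) (Ici 0))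
    (hN1mono : ∀ ω, MonotoneOn (fun t => N1 t ω) (Ici 0))
    (hN12mono : ∀ ω, MonotoneOn (fun t => N12 t ω) (Ici 0))
    (hA1zero : ∀ ω, A1 0 ω = 0) (hD1zero : ∀ ω, D1 0 ω = 0)
    (hA12zero : ∀ ω, A12 0 ω = 0) (hD12zero : ∀ ω, D12 0 ω = 0)
    -- pathwise flow balance: q1(t) = q1(0) + A1(t) − D1(t) − A_{1|2}(t)
    (hflow : ∀ t ≥ (0:ℝ), ∀ ω,
      (q1 t ω : ℝ) = (q1 0 ω : ℝ) + A1 t ω - D1 t ω - A12 t ω)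
    -- at most one switched customer in station 2: D_{1|2}(t) ≤ A_{1|2}(t) ≤ D_{1|2}(t) + 1
    (hAD : ∀ t ≥ (0:ℝ), ∀ ω, D12 t ω ≤ A12 t ω ∧ A12 t ω ≤ D12 t ω + 1)
    -- departures of class-1 customers: D1(t) = N1(B1(t))
    (hD1 : ∀ t ≥ (0:ℝ), ∀ ω,
      D1 t ω = N1 (∫ u in (0:ℝ)..t, if 1 ≤ q1 u ω then (1:ℝ) else 0) ω)
    -- sandwich for switched departures: N_{1|2}(J_{1|2}(t)) ≤ D_{1|2}(t) ≤ N_{1|2}(I2(t))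
    (hD12 : ∀ t ≥ (0:ℝ), ∀ ω,
      N12 (∫ u in (0:ℝ)..t, if c1 < q1 u ω ∧ q2 u ω = 0 then (1:ℝ) else 0) ω ≤ D12 t ω ∧
      D12 t ω ≤ N12 (∫ u in (0:ℝ)..t, if q2 u ω = 0 then (1:ℝ) else 0) ω)
    -- almost sure rate limits
    (hA1lim : ∀ᵐ ω ∂P, Tendsto (fun t : ℝ => (A1 t ω : ℝ) / t) atTop (nhds lam1))
    (hN1lim : ∀ᵐ ω ∂P, Tendsto (fun t : ℝ => (N1 t ω : ℝ) / t) atTop (nhds mu1))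
    (hN12lim : ∀ᵐ ω ∂P, Tendsto (fun t : ℝ => (N12 t ω : ℝ) / t) atTop (nhds mu12))
    (hI2lim : ∀ᵐ ω ∂P,
      Tendsto (fun t : ℝ => (∫ u in (0:ℝ)..t, if q2 u ω = 0 then (1:ℝ) else 0) / t)
        atTop (nhds (1 - ρ2)))
    -- the additional hypothesis: the time-averaged probability that station 1 holds at most
    -- c1 customers vanishes
    (hq1prob : Tendsto
      (fun t : ℝ => (1 / t) * ∫ u in (0:ℝ)..t, (P {ω | q1 u ω ≤ c1}).toReal)
      atTop (nhds 0)) :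
    mu1 + mu12 * (1 - ρ2) ≤ lam1 :=
  cascade_two_station_core_general P lam1 mu1 mu12 ρ2 c1 hρ2_lt hc1 q1 q2 hq1meas hq2meas A1 D1 A12
    D12 N1 N12 hN1mono hN12mono hflow hAD hD1 hD12 hA1lim hN1lim hN12lim hI2lim hq1prob
end

section
/- Suppose ρ2 < 1, almost surely I2(t)/t → 1 − ρ2 as t → ∞, and lim_{t→∞} (1/t)∫_0^t P(q1(u) ≤ c1) du = 0. Then there exists a sequence s_n → ∞ of nonnegative reals such that almost surely lim_{n→∞} D_{1|2}(s_n)/s_n = lim_{n→∞} A_{1|2}(s_n)/s_n = μ_{1|2}(1 − ρ2). (Equation (4.14) of the paper: the exact long-run switching rate along a subsequence.) -/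
/-!
For the partial sums `T n` of the service times the strong law of large numbers gives
`T n / n → 1 / μ₁₂` a.s., and inverting it deterministically yields `N t / t → μ₁₂` a.s.
The time spent with class 2 idle and at most `c1` class-1 customers, divided by `t`, is a
nonnegative quantity whose mean tends to `0` by Fubini; convergence in `L¹` gives convergence in
probability and hence a.s. convergence along some `s n → ∞`. Along that sequence both
`J₁₂ (s n) / s n` and `I₂ (s n) / s n` tend to `1 - ρ₂`, so the sandwich
`N (J₁₂) ≤ D₁₂ ≤ N (I₂)` squeezes `D₁₂ (s n) / s n` to `μ₁₂ (1 - ρ₂)`, and `A₁₂` differs from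
`D₁₂` by at most one.
-/

open MeasureTheory ProbabilityTheory Filter Set Topology

noncomputable def countingProcess (T : ℕ → ℝ) (t : ℝ) : ℕ := sSup {n | T n ≤ t}

section CountingProcess

variable {T : ℕ → ℝ}

lemma bddAbove_setOf_le_of_tendsto_atTop (hT : Tendsto T atTop atTop) (t : ℝ) :
    BddAbove {n | T n ≤ t} := by
  obtain ⟨k, hk⟩ := (hT.eventually_gt_atTop t).exists_forall_of_atTop
  exact ⟨k, fun n hn => not_lt.1 fun hkn => (hk n hkn.le).not_ge hn⟩

lemma le_countingProcess_of_le (hT : Tendsto T atTop atTop) {n : ℕ} {t : ℝ} (h : T n ≤ t) :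
    n ≤ countingProcess T t :=
  le_csSup (bddAbove_setOf_le_of_tendsto_atTop hT t) h

lemma apply_countingProcess_le (hT : Tendsto T atTop atTop) {t : ℝ} (h : T 0 ≤ t) :
    T (countingProcess T t) ≤ t :=
  Nat.sSup_mem ⟨0, h⟩ (bddAbove_setOf_le_of_tendsto_atTop hT t)

lemma lt_apply_countingProcess_add_one (hT : Tendsto T atTop atTop) (t : ℝ) :
    t < T (countingProcess T t + 1) :=
  not_le.1 fun h => (le_countingProcess_of_le hT h).not_gt (Nat.lt_succ_self _)

lemma tendsto_countingProcess_atTop (hT : Tendsto T atTop atTop) :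
    Tendsto (countingProcess T) atTop atTop :=
  Filter.tendsto_atTop.2 fun k =>
    (eventually_ge_atTop (T k)).mono fun _ => le_countingProcess_of_le hT

lemma tendsto_atTop_of_tendsto_div_natCast {m : ℝ} (hm : 0 < m)
    (hT : Tendsto (fun n => T n / n) atTop (𝓝 m)) : Tendsto T atTop atTop := by
  refine (hT.pos_mul_atTop hm tendsto_natCast_atTop_atTop).congr' ?_
  filter_upwards [eventually_ne_atTop 0] with n hn
  exact div_mul_cancel₀ _ (Nat.cast_ne_zero.2 hn)

lemma tendsto_apply_add_one_div_natCast {m : ℝ}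
    (hT : Tendsto (fun n => T n / n) atTop (𝓝 m)) :
    Tendsto (fun n => T (n + 1) / n) atTop (𝓝 m) := by
  have h := ((tendsto_add_atTop_iff_nat 1).2 hT).mul
    ((tendsto_const_nhds (x := (1 : ℝ))).add (tendsto_one_div_atTop_nhds_zero_nat (𝕜 := ℝ)))
  rw [add_zero, mul_one] at h
  refine h.congr' ?_
  filter_upwards [eventually_ne_atTop 0] with n hn
  have : (n : ℝ) ≠ 0 := Nat.cast_ne_zero.2 hn
  push_cast
  field_simp

theorem tendsto_countingProcess_div {m : ℝ} (hm : 0 < m)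
    (hT : Tendsto (fun n => T n / n) atTop (𝓝 m)) :
    Tendsto (fun t => (countingProcess T t : ℝ) / t) atTop (𝓝 m⁻¹) := by
  have hTtop := tendsto_atTop_of_tendsto_div_natCast hm hT
  have hN := tendsto_countingProcess_atTop hTtop
  have hpos : ∀ᶠ t in atTop, (0 : ℝ) < countingProcess T t :=
    (hN.eventually_ge_atTop 1).mono fun t ht => by exact_mod_cast ht
  have h : Tendsto (fun t => t / countingProcess T t) atTop (𝓝 m) := by
    refine tendsto_of_tendsto_of_tendsto_of_le_of_le' (hT.comp hN)
      ((tendsto_apply_add_one_div_natCast hT).comp hN) ?_ ?_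
    · filter_upwards [hpos, eventually_ge_atTop (T 0)] with t ht ht0
      exact div_le_div_of_nonneg_right (apply_countingProcess_le hTtop ht0) ht.le
    · filter_upwards [hpos] with t ht
      exact div_le_div_of_nonneg_right (lt_apply_countingProcess_add_one hTtop t).le ht.le
  simpa only [inv_div] using h.inv₀ hm.ne'

end CountingProcess

theorem ae_tendsto_countingProcess_div {Ω : Type*} [MeasurableSpace Ω] {P : Measure Ω}
    {τ : ℕ → Ω → ℝ} (hint : Integrable (τ 0) P) (hindep : Pairwise fun i j => τ i ⟂ᵢ[P] τ j)
    (hident : ∀ ℓ, IdentDistrib (τ ℓ) (τ 0) P P) (hm : 0 < P[τ 0]) :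
    ∀ᵐ ω ∂P, Tendsto (fun t =>
      (countingProcess (fun n => ∑ ℓ ∈ Finset.range n, τ ℓ ω) t : ℝ) / t) atTop (𝓝 (P[τ 0])⁻¹) := by
  filter_upwards [strong_law_ae τ hint hindep hident] with ω hω
  exact tendsto_countingProcess_div hm (hω.congr fun n => by rw [smul_eq_mul, inv_mul_eq_div])

lemma intervalIntegrable_ite_one {p : ℝ → Prop} [DecidablePred p] (hp : MeasurableSet {u | p u})
    (a b : ℝ) : IntervalIntegrable (fun u => if p u then (1 : ℝ) else 0) volume a b :=
  (intervalIntegrable_const (c := (1 : ℝ))).mono_fun'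
    (Measurable.ite hp measurable_const measurable_const).aestronglyMeasurable
    (ae_of_all _ fun u => by dsimp only; split_ifs <;> simp)

lemma intervalIntegral_ite_one_eq_add {p q r : ℝ → Prop} [DecidablePred p] [DecidablePred q]
    [DecidablePred r] (hp : MeasurableSet {u | p u}) (hq : MeasurableSet {u | q u})
    (hpqr : ∀ u, r u ↔ p u ∨ q u) (hpq : ∀ u, ¬(p u ∧ q u)) (a b : ℝ) :
    ∫ u in a..b, (if r u then (1 : ℝ) else 0) =
      (∫ u in a..b, if p u then (1 : ℝ) else 0) + ∫ u in a..b, if q u then (1 : ℝ) else 0 := by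
  rw [← intervalIntegral.integral_add (intervalIntegrable_ite_one hp a b)
    (intervalIntegrable_ite_one hq a b)]
  congr 1 with u
  have := hpq u
  by_cases hr : r u <;> by_cases hpu : p u <;> by_cases hqu : q u <;> simp_all

section Occupation

variable {Ω : Type*} [MeasurableSpace Ω] {P : Measure Ω} [IsFiniteMeasure P]
  {p : ℝ → Ω → Prop}

lemma intervalIntegrable_measureReal_setOf (hp : MeasurableSet {x : ℝ × Ω | p x.1 x.2})
    (a b : ℝ) : IntervalIntegrable (fun u => P.real {ω | p u ω}) volume a b :=
  (intervalIntegrable_const (c := P.real univ)).mono_fun'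
    (measurable_measure_prodMk_left hp).ennreal_toReal.aestronglyMeasurable
    (ae_of_all _ fun u => by
      dsimp only
      rw [Real.norm_of_nonneg measureReal_nonneg]
      exact measureReal_mono (subset_univ _))

lemma tendsto_average_measureReal_of_imp {q : ℝ → Ω → Prop}
    (hp : MeasurableSet {x : ℝ × Ω | p x.1 x.2}) (hq : MeasurableSet {x : ℝ × Ω | q x.1 x.2})
    (hpq : ∀ u ω, p u ω → q u ω)
    (h : Tendsto (fun t => 1 / t * ∫ u in (0 : ℝ)..t, P.real {ω | q u ω}) atTop (𝓝 0)) :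
    Tendsto (fun t => 1 / t * ∫ u in (0 : ℝ)..t, P.real {ω | p u ω}) atTop (𝓝 0) := by
  refine tendsto_of_tendsto_of_tendsto_of_le_of_le' tendsto_const_nhds h ?_ ?_ <;>
    filter_upwards [eventually_ge_atTop 0] with t ht
  · exact mul_nonneg (by positivity)
      (intervalIntegral.integral_nonneg ht fun u _ => measureReal_nonneg)
  · gcongr
    exact intervalIntegral.integral_mono_on ht (intervalIntegrable_measureReal_setOf hp 0 t)
      (intervalIntegrable_measureReal_setOf hq 0 t)
      fun u _ => measureReal_mono fun ω => hpq u ω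

lemma integrable_ite_one_prod [∀ u ω, Decidable (p u ω)]
    (hp : MeasurableSet {x : ℝ × Ω | p x.1 x.2}) (t : ℝ) :
    Integrable (fun x : Ω × ℝ => if p x.2 x.1 then (1 : ℝ) else 0)
      (P.prod (volume.restrict (Ioc 0 t))) :=
  Integrable.of_bound
    (Measurable.ite (hp.preimage measurable_swap) measurable_const
      measurable_const).aestronglyMeasurable
    1 (ae_of_all _ fun x => by split_ifs <;> simp)

lemma integral_occupation_eq [∀ u ω, Decidable (p u ω)]
    (hp : MeasurableSet {x : ℝ × Ω | p x.1 x.2}) {t : ℝ} (ht : 0 ≤ t) :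
    ∫ ω, (∫ u in (0 : ℝ)..t, if p u ω then (1 : ℝ) else 0) ∂P =
      ∫ u in (0 : ℝ)..t, P.real {ω | p u ω} := by
  simp only [intervalIntegral.integral_of_le ht]
  rw [integral_integral_swap (integrable_ite_one_prod hp t)]
  congr 1 with u
  rw [← integral_indicator_one (s := {ω | p u ω}) (hp.preimage measurable_prodMk_left)]
  congr 1 with ω
  simp [Set.indicator_apply]

theorem exists_seq_ae_tendsto_occupation_div_zero [∀ u ω, Decidable (p u ω)]
    (hp : MeasurableSet {x : ℝ × Ω | p x.1 x.2})
    (h : Tendsto (fun t => 1 / t * ∫ u in (0 : ℝ)..t, P.real {ω | p u ω}) atTop (𝓝 0)) :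
    ∃ s : ℕ → ℝ, (∀ n, 0 < s n) ∧ Tendsto s atTop atTop ∧ ∀ᵐ ω ∂P,
      Tendsto (fun n => (∫ u in (0 : ℝ)..s n, if p u ω then (1 : ℝ) else 0) / s n) atTop (𝓝 0) := by
  -- work at times `max t 1` so that every time in the subsequence is positive
  set g : ℝ → ℝ := fun t => max t 1
  have hg : Tendsto g atTop atTop := tendsto_atTop_mono (le_max_left · 1) tendsto_id
  have hg_pos : ∀ t, 0 < g t := fun t => lt_max_of_lt_right one_pos
  set X : ℝ → Ω → ℝ := fun t ω => (∫ u in (0 : ℝ)..g t, if p u ω then (1 : ℝ) else 0) / g t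
  have hX_nonneg : ∀ t ω, 0 ≤ X t ω := fun t ω =>
    div_nonneg (intervalIntegral.integral_nonneg (hg_pos t).le fun u _ => by split_ifs <;> simp)
      (hg_pos t).le
  have hX_int : ∀ t, Integrable (X t) P := fun t => by
    simpa only [X, intervalIntegral.integral_of_le (hg_pos t).le] using
      (integrable_ite_one_prod hp (g t)).integral_prod_left.div_const (g t)
  have hX_norm : ∀ t, eLpNorm (X t - 0) 1 P =
      ENNReal.ofReal (1 / g t * ∫ u in (0 : ℝ)..g t, P.real {ω | p u ω}) := fun t => by
    rw [sub_zero, eLpNorm_one_eq_lintegral_enorm,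
      ← ofReal_integral_norm_eq_lintegral_enorm (hX_int t)]
    simp only [Real.norm_of_nonneg (hX_nonneg t _), X, integral_div,
      integral_occupation_eq hp (hg_pos t).le, one_div_mul_eq_div]
  have hX : TendstoInMeasure P X atTop 0 := by
    refine tendstoInMeasure_of_tendsto_eLpNorm one_ne_zero
      (fun t => (hX_int t).aestronglyMeasurable) aestronglyMeasurable_const ?_
    have h' := ENNReal.tendsto_ofReal (h.comp hg)
    rw [ENNReal.ofReal_zero] at h'
    exact h'.congr fun t => (hX_norm t).symm
  obtain ⟨ns, hns, hae⟩ := hX.exists_seq_tendsto_ae'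
  exact ⟨g ∘ ns, fun n => hg_pos _, hg.comp hns, hae⟩

end Occupation

lemma tendsto_comp_div_of_tendsto_div_s3 {f : ℝ → ℝ} {a b : ℝ}
    (hf : Tendsto (fun t => f t / t) atTop (𝓝 a)) (hb : 0 < b) {y s : ℕ → ℝ}
    (hs : Tendsto s atTop atTop) (hys : Tendsto (fun n => y n / s n) atTop (𝓝 b)) :
    Tendsto (fun n => f (y n) / s n) atTop (𝓝 (a * b)) := by
  have hy : Tendsto y atTop atTop := by
    refine (hys.pos_mul_atTop hb hs).congr' ?_
    filter_upwards [hs.eventually_ne_atTop 0] with n hn using div_mul_cancel₀ _ hn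
  refine ((hf.comp hy).mul hys).congr' ?_
  filter_upwards [hy.eventually_ne_atTop 0] with n hn using div_mul_div_cancel₀ hn

lemma tendsto_div_of_le_of_le_add_one {a b s : ℕ → ℝ} {L : ℝ} (hs : Tendsto s atTop atTop)
    (hba : ∀ n, b n ≤ a n) (hab : ∀ n, a n ≤ b n + 1)
    (hb : Tendsto (fun n => b n / s n) atTop (𝓝 L)) :
    Tendsto (fun n => a n / s n) atTop (𝓝 L) := by
  have hb' : Tendsto (fun n => b n / s n + 1 / s n) atTop (𝓝 L) := by
    simpa only [add_zero] using hb.add (tendsto_const_nhds.div_atTop hs)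
  refine tendsto_of_tendsto_of_tendsto_of_le_of_le' hb hb' ?_ ?_ <;>
    filter_upwards [hs.eventually_gt_atTop 0] with n hn
  · exact div_le_div_of_nonneg_right (hba n) hn.le
  · rw [← add_div]
    exact div_le_div_of_nonneg_right (hab n) hn.le

theorem switching_rate_along_subsequence_general
    {Ω : Type*} [MeasurableSpace Ω] (P : Measure Ω) [IsProbabilityMeasure P]
    (mu12 ρ2 : ℝ) (c1 : ℕ) (hmu12 : 0 < mu12)
    (hρ2_lt : ρ2 < 1)
    (q1 q2 : ℝ → Ω → ℕ)
    (hq1meas : Measurable (Function.uncurry q1))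
    (hq2meas : Measurable (Function.uncurry q2))
    (τ : ℕ → Ω → ℝ)
    (hindep : iIndepFun τ P)
    (hident : ∀ ℓ, IdentDistrib (τ ℓ) (τ 0) P P)
    (hint : Integrable (τ 0) P)
    (hmean : ∫ ω, τ 0 ω ∂P = 1 / mu12)
    (N : ℝ → Ω → ℕ)
    (hN : ∀ t ω, N t ω = sSup {n : ℕ | ∑ ℓ ∈ Finset.range n, τ ℓ ω ≤ t})
    (A12 D12 : ℝ → Ω → ℕ)
    (hD12 : ∀ t ≥ (0:ℝ), ∀ ω,
      N (∫ u in (0:ℝ)..t, if c1 < q1 u ω ∧ q2 u ω = 0 then (1:ℝ) else 0) ω ≤ D12 t ω ∧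
      D12 t ω ≤ N (∫ u in (0:ℝ)..t, if q2 u ω = 0 then (1:ℝ) else 0) ω)
    (hAD : ∀ t ≥ (0:ℝ), ∀ ω, D12 t ω ≤ A12 t ω ∧ A12 t ω ≤ D12 t ω + 1)
    (hI2lim : ∀ᵐ ω ∂P,
      Tendsto (fun t : ℝ => (∫ u in (0:ℝ)..t, if q2 u ω = 0 then (1:ℝ) else 0) / t)
        atTop (nhds (1 - ρ2)))
    (hq1prob : Tendsto
      (fun t : ℝ => (1 / t) * ∫ u in (0:ℝ)..t, (P {ω | q1 u ω ≤ c1}).toReal)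
      atTop (nhds 0)) :
    ∃ s : ℕ → ℝ, (∀ n, 0 ≤ s n) ∧ Tendsto s atTop atTop ∧
      ∀ᵐ ω ∂P,
        Tendsto (fun n => (D12 (s n) ω : ℝ) / s n) atTop (nhds (mu12 * (1 - ρ2))) ∧
        Tendsto (fun n => (A12 (s n) ω : ℝ) / s n) atTop (nhds (mu12 * (1 - ρ2))) := by
  have hlow : MeasurableSet {x : ℝ × Ω | q1 x.1 x.2 ≤ c1} := hq1meas (.of_discrete (s := Iic c1))
  have hidle : MeasurableSet {x : ℝ × Ω | q2 x.1 x.2 = 0} := hq2meas (.of_discrete (s := {0}))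
  have hbad : MeasurableSet {x : ℝ × Ω | q1 x.1 x.2 ≤ c1 ∧ q2 x.1 x.2 = 0} := hlow.inter hidle
  have hgood : MeasurableSet {x : ℝ × Ω | c1 < q1 x.1 x.2 ∧ q2 x.1 x.2 = 0} :=
    (hq1meas (.of_discrete (s := Ioi c1))).inter hidle
  obtain ⟨s, hs_pos, hs_top, hs_bad⟩ := exists_seq_ae_tendsto_occupation_div_zero hbad
    (tendsto_average_measureReal_of_imp (p := fun u ω => q1 u ω ≤ c1 ∧ q2 u ω = 0) hbad hlow
      (fun _ _ => And.left) hq1prob)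
  refine ⟨s, fun n => (hs_pos n).le, hs_top, ?_⟩
  have hrate : ∀ᵐ ω ∂P, Tendsto (fun t => (N t ω : ℝ) / t) atTop (𝓝 mu12) := by
    have hm : 0 < P[τ 0] := hmean ▸ one_div_pos.2 hmu12
    filter_upwards [ae_tendsto_countingProcess_div hint (fun i j hij => hindep.indepFun hij)
      hident hm] with ω hω
    simpa only [hN, countingProcess, hmean, one_div, inv_inv] using hω
  filter_upwards [hrate, hI2lim, hs_bad] with ω hωN hωI hωB
  have hI := hωI.comp hs_top
  have hJ : Tendsto (fun n => (∫ u in (0:ℝ)..s n,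
      if c1 < q1 u ω ∧ q2 u ω = 0 then (1:ℝ) else 0) / s n) atTop (𝓝 (1 - ρ2)) := by
    have hsplit := intervalIntegral_ite_one_eq_add
      (r := fun u => q2 u ω = 0) (p := fun u => c1 < q1 u ω ∧ q2 u ω = 0)
      (q := fun u => q1 u ω ≤ c1 ∧ q2 u ω = 0)
      (hgood.preimage measurable_prodMk_right) (hbad.preimage measurable_prodMk_right)
      (fun _ => by omega) (fun _ => by omega)
    simpa only [sub_zero, Function.comp_apply, hsplit, add_div, add_sub_cancel_right] using
      hI.sub hωB
  have h1ρ : 0 < 1 - ρ2 := sub_pos.2 hρ2_lt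
  have hDn := fun n => hD12 (s n) (hs_pos n).le ω
  have hD : Tendsto (fun n => (D12 (s n) ω : ℝ) / s n) atTop (𝓝 (mu12 * (1 - ρ2))) :=
    tendsto_of_tendsto_of_tendsto_of_le_of_le
      (tendsto_comp_div_of_tendsto_div_s3 hωN h1ρ hs_top hJ)
      (tendsto_comp_div_of_tendsto_div_s3 hωN h1ρ hs_top hI)
      (fun n => div_le_div_of_nonneg_right (Nat.cast_le.2 (hDn n).1) (hs_pos n).le)
      (fun n => div_le_div_of_nonneg_right (Nat.cast_le.2 (hDn n).2) (hs_pos n).le)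
  have hAn := fun n => hAD (s n) (hs_pos n).le ω
  exact ⟨hD, tendsto_div_of_le_of_le_add_one hs_top (fun n => Nat.cast_le.2 (hAn n).1)
    (fun n => by exact_mod_cast (hAn n).2) hD⟩

/-- equation (4.14) of the paper: the exact long-run switching rate along a
subsequence.  With the setup of Lemma 4.2 — queue lengths `q1, q2` jointly measurable,
`I2 t ω = ∫_0^t 1(q2 u ω = 0) du`, `J_{1|2} t ω = ∫_0^t 1(q1 u ω > c1 ∧ q2 u ω = 0) du`,
`(τ ℓ)` i.i.d. strictly positive integrable service times with mean `1/μ_{1|2}`, `N` the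
associated counting process, and `A_{1|2}, D_{1|2}` satisfying the sandwich
`N (J_{1|2} t) ≤ D_{1|2} t ≤ N (I2 t)` and `D_{1|2} t ≤ A_{1|2} t ≤ D_{1|2} t + 1` —
if `ρ2 < 1`, almost surely `I2 t / t → 1 − ρ2`, and `(1/t) ∫_0^t P(q1 u ≤ c1) du → 0`,
then there is a sequence of nonnegative reals `s n → ∞` along which, almost surely,
`D_{1|2} (s n) / s n → μ_{1|2} (1 − ρ2)` and `A_{1|2} (s n) / s n → μ_{1|2} (1 − ρ2)`. -/
theorem switching_rate_along_subsequence
    {Ω : Type*} [MeasurableSpace Ω] (P : Measure Ω) [IsProbabilityMeasure P]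
    (mu12 ρ2 : ℝ) (c1 : ℕ) (hmu12 : 0 < mu12)
    (hρ2_nonneg : 0 ≤ ρ2) (hρ2_lt : ρ2 < 1) (hc1 : 1 ≤ c1)
    (q1 q2 : ℝ → Ω → ℕ)
    (hq1meas : Measurable (Function.uncurry q1))
    (hq2meas : Measurable (Function.uncurry q2))
    (τ : ℕ → Ω → ℝ)
    (hτmeas : ∀ ℓ, Measurable (τ ℓ))
    (hindep : iIndepFun τ P)
    (hident : ∀ ℓ, IdentDistrib (τ ℓ) (τ 0) P P)
    (hpos : ∀ ℓ ω, 0 < τ ℓ ω)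
    (hint : Integrable (τ 0) P)
    (hmean : ∫ ω, τ 0 ω ∂P = 1 / mu12)
    (N : ℝ → Ω → ℕ)
    (hN : ∀ t ω, N t ω = sSup {n : ℕ | ∑ ℓ ∈ Finset.range n, τ ℓ ω ≤ t})
    (A12 D12 : ℝ → Ω → ℕ)
    (hD12 : ∀ t ≥ (0:ℝ), ∀ ω,
      N (∫ u in (0:ℝ)..t, if c1 < q1 u ω ∧ q2 u ω = 0 then (1:ℝ) else 0) ω ≤ D12 t ω ∧
      D12 t ω ≤ N (∫ u in (0:ℝ)..t, if q2 u ω = 0 then (1:ℝ) else 0) ω)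
    (hAD : ∀ t ≥ (0:ℝ), ∀ ω, D12 t ω ≤ A12 t ω ∧ A12 t ω ≤ D12 t ω + 1)
    (hI2lim : ∀ᵐ ω ∂P,
      Tendsto (fun t : ℝ => (∫ u in (0:ℝ)..t, if q2 u ω = 0 then (1:ℝ) else 0) / t)
        atTop (nhds (1 - ρ2)))
    (hq1prob : Tendsto
      (fun t : ℝ => (1 / t) * ∫ u in (0:ℝ)..t, (P {ω | q1 u ω ≤ c1}).toReal)
      atTop (nhds 0)) :
    ∃ s : ℕ → ℝ, (∀ n, 0 ≤ s n) ∧ Tendsto s atTop atTop ∧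
      ∀ᵐ ω ∂P,
        Tendsto (fun n => (D12 (s n) ω : ℝ) / s n) atTop (nhds (mu12 * (1 - ρ2))) ∧
        Tendsto (fun n => (A12 (s n) ω : ℝ) / s n) atTop (nhds (mu12 * (1 - ρ2))) :=
  switching_rate_along_subsequence_general P mu12 ρ2 c1 hmu12 hρ2_lt q1 q2 hq1meas hq2meas τ hindep
    hident hint hmean N hN A12 D12 hD12 hAD hI2lim hq1prob
end
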